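/- arXiv:1207.4652 — 2 statements merged into one kernel-verified Lean document; each statement's English description precedes it below -/
import Mathlib

section
/- Commutator identity for twisted second-order operators: Let n ≥ 1 and let J be the standard 2n×2n symplectic matrix. For j = 1,…,2n define the operator Ṽ'_j on smooth functions f : ℝ^{2n} → ℂ by (Ṽ'_j f)(z) := ∂f/∂z_j (z) - iπ (Jz)_j f(z). For a real symmetric 2n×2n matrix A = (a_{jk}), corresponding to S := -A J ∈ sp(2n,ℝ), define Δ_S f := Σ_{j,k=1}^{2n} a_{jk} Ṽ'_j (Ṽ'_k f). Then for any two real symmetric 2n×2n matrices A₁, A₂ with S₁ = -A₁J, S₂ = -A₂J, and every smooth f : ℝ^{2n} → ℂ, one has (i/4π)²( Δ_{S₁}(Δ_{S₂} f) - Δ_{S₂}(Δ_{S₁} f) ) = (i/4π) Δ_{[S₁,S₂]} f, where [S₁,S₂] := S₁S₂ - S₂S₁ and Δ_{[S₁,S₂]} is the operator associated to the symmetric matrix [S₁,S₂]·J. -/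
open Matrix Complex

/-- The standard symplectic matrix `J = [[0, Iₙ], [-Iₙ, 0]]`. -/
noncomputable def stdJ (n : ℕ) : Matrix (Fin n ⊕ Fin n) (Fin n ⊕ Fin n) ℝ :=
  Matrix.fromBlocks 0 1 (-1) 0

/-- The twisted derivative `(Ṽ'_j f)(z) = ∂f/∂z_j(z) - iπ (Jz)_j f(z)`. -/
noncomputable def twistedDeriv {n : ℕ} (j : Fin n ⊕ Fin n)
    (f : ((Fin n ⊕ Fin n) → ℝ) → ℂ) (z : (Fin n ⊕ Fin n) → ℝ) : ℂ :=
  fderiv ℝ f z (Pi.single j 1) -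
    Complex.I * (Real.pi : ℂ) * (((stdJ n).mulVec z j : ℝ) : ℂ) * f z

/-- The second-order operator `Δ_S f = Σ_{j,k} a_{jk} Ṽ'_j (Ṽ'_k f)` associated with
the symmetric matrix `A = S J` (so that `S = -A J`). -/
noncomputable def DeltaOp {n : ℕ} (A : Matrix (Fin n ⊕ Fin n) (Fin n ⊕ Fin n) ℝ)
    (f : ((Fin n ⊕ Fin n) → ℝ) → ℂ) (z : (Fin n ⊕ Fin n) → ℝ) : ℂ :=
  ∑ j, ∑ k, (A j k : ℂ) * twistedDeriv j (twistedDeriv k f) z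

open scoped ContDiff

namespace DeltaAux

variable {n : ℕ}

lemma one_le_inf : (1 : WithTop ℕ∞) ≤ ∞ := by
  exact_mod_cast le_top

lemma inf_add_one : (∞ : WithTop ℕ∞) + 1 ≤ ∞ := by
  simp

/-- The continuous linear functional `z ↦ (J z)ₖ`. -/
noncomputable def JL (n : ℕ) (k : Fin n ⊕ Fin n) : ((Fin n ⊕ Fin n) → ℝ) →L[ℝ] ℝ :=
  LinearMap.toContinuousLinearMap ((LinearMap.proj k).comp (Matrix.mulVecLin (stdJ n)))

lemma JL_apply (k : Fin n ⊕ Fin n) (z : (Fin n ⊕ Fin n) → ℝ) :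
    JL n k z = (stdJ n).mulVec z k := rfl

lemma JL_single (k j : Fin n ⊕ Fin n) : JL n k (Pi.single j 1) = stdJ n k j := by
  rw [JL_apply]
  simp

lemma stdJ_antisymm (j k : Fin n ⊕ Fin n) : stdJ n k j = - stdJ n j k := by
  rcases j with j | j <;> rcases k with k | k <;>
    simp [stdJ, Matrix.one_apply, eq_comm]

lemma stdJ_mul_stdJ : stdJ n * stdJ n = -1 := by
  simp [stdJ, Matrix.fromBlocks_multiply, ← Matrix.fromBlocks_one]
  ext i j
  rcases i with i | i <;> rcases j with j | j <;> simp [Matrix.fromBlocks]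

lemma hasFDerivAt_coeff (k : Fin n ⊕ Fin n) (z : (Fin n ⊕ Fin n) → ℝ) :
    HasFDerivAt (fun w : (Fin n ⊕ Fin n) → ℝ =>
        Complex.I * (Real.pi : ℂ) * (((stdJ n).mulVec w k : ℝ) : ℂ))
      ((Complex.I * (Real.pi : ℂ)) • (Complex.ofRealCLM.comp (JL n k))) z := by
  have h0 : HasFDerivAt (fun w : (Fin n ⊕ Fin n) → ℝ => (stdJ n).mulVec w k) (JL n k) z := by
    have : (fun w : (Fin n ⊕ Fin n) → ℝ => (stdJ n).mulVec w k) = ⇑(JL n k) := by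
      funext w; rw [JL_apply]
    rw [this]
    exact (JL n k).hasFDerivAt
  have h1 : HasFDerivAt (fun w : (Fin n ⊕ Fin n) → ℝ => (((stdJ n).mulVec w k : ℝ) : ℂ))
      (Complex.ofRealCLM.comp (JL n k)) z := Complex.ofRealCLM.hasFDerivAt.comp z h0
  exact h1.const_mul _

lemma contDiff_coeff (k : Fin n ⊕ Fin n) :
    ContDiff ℝ ∞ (fun w : (Fin n ⊕ Fin n) → ℝ => (((stdJ n).mulVec w k : ℝ) : ℂ)) := by
  have : (fun w : (Fin n ⊕ Fin n) → ℝ => (((stdJ n).mulVec w k : ℝ) : ℂ))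
      = ⇑(Complex.ofRealCLM.comp (JL n k)) := by
    funext w; simp [JL_apply]
  rw [this]
  exact (Complex.ofRealCLM.comp (JL n k)).contDiff

lemma td_contDiff {g : ((Fin n ⊕ Fin n) → ℝ) → ℂ} (hg : ContDiff ℝ ∞ g)
    (k : Fin n ⊕ Fin n) : ContDiff ℝ ∞ (twistedDeriv k g) := by
  have h1 : ContDiff ℝ ∞ (fun z => fderiv ℝ g z (Pi.single k 1)) :=
    (hg.fderiv_right inf_add_one).clm_apply contDiff_const
  have h2 := contDiff_coeff (n := n) k
  exact h1.sub ((contDiff_const.mul h2).mul hg)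

lemma td_diff {g : ((Fin n ⊕ Fin n) → ℝ) → ℂ} (hg : ContDiff ℝ ∞ g)
    (k : Fin n ⊕ Fin n) : Differentiable ℝ (twistedDeriv k g) :=
  (td_contDiff hg k).differentiable (by simp)

lemma hasFDerivAt_td {g : ((Fin n ⊕ Fin n) → ℝ) → ℂ} (hg : ContDiff ℝ ∞ g)
    (k : Fin n ⊕ Fin n) (z : (Fin n ⊕ Fin n) → ℝ) :
    HasFDerivAt (twistedDeriv k g)
      (((fderiv ℝ g z).comp (0 : ((Fin n ⊕ Fin n) → ℝ) →L[ℝ] ((Fin n ⊕ Fin n) → ℝ))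
          + (fderiv ℝ (fderiv ℝ g) z).flip (Pi.single k 1)) -
        ((Complex.I * (Real.pi : ℂ) * (((stdJ n).mulVec z k : ℝ) : ℂ)) • fderiv ℝ g z +
          ((Complex.I * (Real.pi : ℂ)) • (Complex.ofRealCLM.comp (JL n k))).smulRight (g z))) z := by
  have hgd : Differentiable ℝ g := hg.differentiable (by simp)
  have hg' : ContDiff ℝ ∞ (fderiv ℝ g) := hg.fderiv_right inf_add_one
  have h2 : HasFDerivAt (fderiv ℝ g) (fderiv ℝ (fderiv ℝ g) z) z :=
    ((hg'.differentiable (by simp)) z).hasFDerivAt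
  have h1 : HasFDerivAt (fun w => fderiv ℝ g w (Pi.single k 1))
      ((fderiv ℝ g z).comp (0 : ((Fin n ⊕ Fin n) → ℝ) →L[ℝ] ((Fin n ⊕ Fin n) → ℝ))
        + (fderiv ℝ (fderiv ℝ g) z).flip (Pi.single k 1)) z :=
    h2.clm_apply (hasFDerivAt_const _ _)
  have hprod : HasFDerivAt
      (fun w => Complex.I * (Real.pi : ℂ) * (((stdJ n).mulVec w k : ℝ) : ℂ) * g w)
      ((Complex.I * (Real.pi : ℂ) * (((stdJ n).mulVec z k : ℝ) : ℂ)) • fderiv ℝ g z +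
        ((Complex.I * (Real.pi : ℂ)) • (Complex.ofRealCLM.comp (JL n k))).smulRight (g z)) z :=
    (hasFDerivAt_coeff k z).mul' (hgd z).hasFDerivAt
  exact h1.sub hprod

lemma td_td_formula {g : ((Fin n ⊕ Fin n) → ℝ) → ℂ} (hg : ContDiff ℝ ∞ g)
    (j k : Fin n ⊕ Fin n) (z : (Fin n ⊕ Fin n) → ℝ) :
    twistedDeriv j (twistedDeriv k g) z =
      fderiv ℝ (fderiv ℝ g) z (Pi.single j 1) (Pi.single k 1)
        - Complex.I * (Real.pi : ℂ) * ((stdJ n k j : ℝ) : ℂ) * g z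
        - Complex.I * (Real.pi : ℂ) * (((stdJ n).mulVec z k : ℝ) : ℂ) *
            fderiv ℝ g z (Pi.single j 1)
        - Complex.I * (Real.pi : ℂ) * (((stdJ n).mulVec z j : ℝ) : ℂ) *
            (fderiv ℝ g z (Pi.single k 1)
              - Complex.I * (Real.pi : ℂ) * (((stdJ n).mulVec z k : ℝ) : ℂ) * g z) := by
  have hD := (hasFDerivAt_td hg k z).fderiv
  rw [show twistedDeriv j (twistedDeriv k g) z =
      fderiv ℝ (twistedDeriv k g) z (Pi.single j 1) -
        Complex.I * (Real.pi : ℂ) * (((stdJ n).mulVec z j : ℝ) : ℂ) *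
          twistedDeriv k g z from rfl]
  rw [hD]
  rw [show twistedDeriv k g z = fderiv ℝ g z (Pi.single k 1) -
      Complex.I * (Real.pi : ℂ) * (((stdJ n).mulVec z k : ℝ) : ℂ) * g z from rfl]
  simp only [ContinuousLinearMap.sub_apply, ContinuousLinearMap.add_apply,
    ContinuousLinearMap.comp_apply, ContinuousLinearMap.zero_apply,
    ContinuousLinearMap.flip_apply, ContinuousLinearMap.smul_apply,
    ContinuousLinearMap.smulRight_apply, ContinuousLinearMap.coe_comp',
    Function.comp_apply, Complex.ofRealCLM_apply, JL_single, smul_eq_mul,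
    map_zero]
  ring

lemma td_comm {g : ((Fin n ⊕ Fin n) → ℝ) → ℂ} (hg : ContDiff ℝ ∞ g)
    (j k : Fin n ⊕ Fin n) (z : (Fin n ⊕ Fin n) → ℝ) :
    twistedDeriv j (twistedDeriv k g) z =
      twistedDeriv k (twistedDeriv j g) z +
        2 * (Real.pi : ℂ) * Complex.I * ((stdJ n j k : ℝ) : ℂ) * g z := by
  have hgd : Differentiable ℝ g := hg.differentiable (by simp)
  have hg' : ContDiff ℝ ∞ (fderiv ℝ g) := hg.fderiv_right inf_add_one
  have h2 : HasFDerivAt (fderiv ℝ g) (fderiv ℝ (fderiv ℝ g) z) z :=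
    ((hg'.differentiable (by simp)) z).hasFDerivAt
  have hsymm : fderiv ℝ (fderiv ℝ g) z (Pi.single j 1) (Pi.single k 1) =
      fderiv ℝ (fderiv ℝ g) z (Pi.single k 1) (Pi.single j 1) :=
    second_derivative_symmetric (fun y => (hgd y).hasFDerivAt) h2 _ _
  rw [td_td_formula hg j k z, td_td_formula hg k j z, hsymm,
    stdJ_antisymm j k]
  push_cast
  ring

lemma td_comm_fun {g : ((Fin n ⊕ Fin n) → ℝ) → ℂ} (hg : ContDiff ℝ ∞ g)
    (j k : Fin n ⊕ Fin n) :
    twistedDeriv j (twistedDeriv k g) =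
      fun z => twistedDeriv k (twistedDeriv j g) z +
        2 * (Real.pi : ℂ) * Complex.I * ((stdJ n j k : ℝ) : ℂ) * g z :=
  funext fun z => td_comm hg j k z

lemma td_add_mul {g h : ((Fin n ⊕ Fin n) → ℝ) → ℂ} (hg : Differentiable ℝ g)
    (hh : Differentiable ℝ h) (c : ℂ) (j : Fin n ⊕ Fin n) :
    twistedDeriv j (fun z => g z + c * h z) =
      fun z => twistedDeriv j g z + c * twistedDeriv j h z := by
  funext z
  show fderiv ℝ (fun z => g z + c * h z) z (Pi.single j 1) - _ = _
  rw [fderiv_fun_add (hg z) ((hh z).const_mul c), fderiv_const_mul (hh z) c]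
  simp only [twistedDeriv, ContinuousLinearMap.add_apply, ContinuousLinearMap.smul_apply,
    smul_eq_mul]
  ring

lemma td_sum {α : Type*} (s : Finset α) (c : α → ℂ) (g : α → ((Fin n ⊕ Fin n) → ℝ) → ℂ)
    (hg : ∀ p ∈ s, Differentiable ℝ (g p)) (j : Fin n ⊕ Fin n) (z : (Fin n ⊕ Fin n) → ℝ) :
    twistedDeriv j (fun w => ∑ p ∈ s, c p * g p w) z =
      ∑ p ∈ s, c p * twistedDeriv j (g p) z := by
  show fderiv ℝ (fun w => ∑ p ∈ s, c p * g p w) z (Pi.single j 1) - _ = _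
  rw [fderiv_fun_sum (fun p hp => ((hg p hp) z).const_mul (c p))]
  rw [ContinuousLinearMap.sum_apply]
  have : ∀ p ∈ s, fderiv ℝ (fun w => c p * g p w) z (Pi.single j 1)
      = c p * fderiv ℝ (g p) z (Pi.single j 1) := by
    intro p hp
    rw [fderiv_const_mul (hg p hp z) (c p)]
    simp
  rw [Finset.sum_congr rfl this, Finset.mul_sum, ← Finset.sum_sub_distrib]
  refine Finset.sum_congr rfl fun p hp => ?_
  simp only [twistedDeriv]
  ring

/-- The key fourth-order reshuffle identity. -/
lemma key {f : ((Fin n ⊕ Fin n) → ℝ) → ℂ} (hf : ContDiff ℝ ∞ f)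
    (j k l m : Fin n ⊕ Fin n) (z : (Fin n ⊕ Fin n) → ℝ) :
    twistedDeriv j (twistedDeriv k (twistedDeriv l (twistedDeriv m f))) z =
      twistedDeriv l (twistedDeriv m (twistedDeriv j (twistedDeriv k f))) z
        + 2 * (Real.pi : ℂ) * Complex.I * ((stdJ n j l : ℝ) : ℂ) *
            twistedDeriv k (twistedDeriv m f) z
        + 2 * (Real.pi : ℂ) * Complex.I * ((stdJ n k l : ℝ) : ℂ) *
            twistedDeriv j (twistedDeriv m f) z
        + 2 * (Real.pi : ℂ) * Complex.I * ((stdJ n j m : ℝ) : ℂ) *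
            twistedDeriv l (twistedDeriv k f) z
        + 2 * (Real.pi : ℂ) * Complex.I * ((stdJ n k m : ℝ) : ℂ) *
            twistedDeriv l (twistedDeriv j f) z := by
  have hm : ContDiff ℝ ∞ (twistedDeriv m f) := td_contDiff hf m
  have hk : ContDiff ℝ ∞ (twistedDeriv k f) := td_contDiff hf k
  have hj : ContDiff ℝ ∞ (twistedDeriv j f) := td_contDiff hf j
  have hkm : ContDiff ℝ ∞ (twistedDeriv k (twistedDeriv m f)) := td_contDiff hm k
  have hjk : ContDiff ℝ ∞ (twistedDeriv j (twistedDeriv k f)) := td_contDiff hk j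
  have hmjk : ContDiff ℝ ∞ (twistedDeriv m (twistedDeriv j (twistedDeriv k f))) :=
    td_contDiff hjk m
  -- abbreviations
  set c := fun (a b : Fin n ⊕ Fin n) =>
    2 * (Real.pi : ℂ) * Complex.I * ((stdJ n a b : ℝ) : ℂ) with hc
  -- step 1: V k (V l (V m f)) = V l (V k (V m f)) + c k l • (V m f)
  have e1 : twistedDeriv k (twistedDeriv l (twistedDeriv m f)) =
      fun w => twistedDeriv l (twistedDeriv k (twistedDeriv m f)) w +
        c k l * twistedDeriv m f w := td_comm_fun hm k l
  -- step: V j (V k (V m f)) rearranged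
  have e4 : twistedDeriv k (twistedDeriv m f) =
      fun w => twistedDeriv m (twistedDeriv k f) w + c k m * f w := td_comm_fun hf k m
  have e5 : twistedDeriv j (twistedDeriv k (twistedDeriv m f)) =
      fun w => twistedDeriv j (twistedDeriv m (twistedDeriv k f)) w +
        c k m * twistedDeriv j f w := by
    rw [e4]
    exact td_add_mul (td_diff hk m) (hf.differentiable (by simp)) _ j
  have e6 : twistedDeriv j (twistedDeriv m (twistedDeriv k f)) =
      fun w => twistedDeriv m (twistedDeriv j (twistedDeriv k f)) w +
        c j m * twistedDeriv k f w := td_comm_fun hk j m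
  have e7 : twistedDeriv j (twistedDeriv k (twistedDeriv m f)) =
      fun w => (twistedDeriv m (twistedDeriv j (twistedDeriv k f)) w +
        c j m * twistedDeriv k f w) + c k m * twistedDeriv j f w := by
    rw [e5, e6]
  -- apply V l to e7
  have e8 : twistedDeriv l (twistedDeriv j (twistedDeriv k (twistedDeriv m f))) =
      fun w => (twistedDeriv l (twistedDeriv m (twistedDeriv j (twistedDeriv k f))) w +
          c j m * twistedDeriv l (twistedDeriv k f) w) +
        c k m * twistedDeriv l (twistedDeriv j f) w := by
    rw [e7]
    have h1 : Differentiable ℝ (fun w =>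
        twistedDeriv m (twistedDeriv j (twistedDeriv k f)) w +
          c j m * twistedDeriv k f w) :=
      (td_diff hjk m).add ((td_diff hf k).const_mul (c j m))
    rw [td_add_mul h1 (td_diff hf j) (c k m) l]
    have h2 : twistedDeriv l (fun w =>
        twistedDeriv m (twistedDeriv j (twistedDeriv k f)) w +
          c j m * twistedDeriv k f w) =
        fun w => twistedDeriv l (twistedDeriv m (twistedDeriv j (twistedDeriv k f))) w +
          c j m * twistedDeriv l (twistedDeriv k f) w :=
      td_add_mul (td_diff hjk m) (td_diff hf k) (c j m) l
    rw [h2]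
  -- step 3 : V j (V l (V k (V m f))) = V l (V j (V k (V m f))) + c j l * V k (V m f)
  have e3 : twistedDeriv j (twistedDeriv l (twistedDeriv k (twistedDeriv m f))) =
      fun w => twistedDeriv l (twistedDeriv j (twistedDeriv k (twistedDeriv m f))) w +
        c j l * twistedDeriv k (twistedDeriv m f) w := td_comm_fun hkm j l
  -- step 2: outer expansion
  have e2 : twistedDeriv j (twistedDeriv k (twistedDeriv l (twistedDeriv m f))) =
      fun w => twistedDeriv j (twistedDeriv l (twistedDeriv k (twistedDeriv m f))) w +
        c k l * twistedDeriv j (twistedDeriv m f) w := by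
    rw [e1]
    exact td_add_mul (td_diff hkm l) (td_diff hf m) (c k l) j
  rw [e2]
  simp only [e3, e8]
  ring

lemma sum4 {M : Type*} [AddCommMonoid M] (F : (Fin n ⊕ Fin n) → (Fin n ⊕ Fin n) →
    (Fin n ⊕ Fin n) → (Fin n ⊕ Fin n) → M) :
    (∑ j, ∑ k, ∑ l, ∑ m, F j k l m) =
      ∑ t : ((Fin n ⊕ Fin n) × (Fin n ⊕ Fin n)) × ((Fin n ⊕ Fin n) × (Fin n ⊕ Fin n)),
        F t.1.1 t.1.2 t.2.1 t.2.2 := by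
  symm
  rw [Fintype.sum_prod_type, Fintype.sum_prod_type]
  refine Finset.sum_congr rfl fun j _ => ?_
  refine Finset.sum_congr rfl fun k _ => ?_
  rw [Fintype.sum_prod_type]

/-- Reindexing a quadruple sum by a permutation of the four indices. -/
lemma sum4_reindex {M : Type*} [AddCommMonoid M]
    (F G : (Fin n ⊕ Fin n) → (Fin n ⊕ Fin n) → (Fin n ⊕ Fin n) → (Fin n ⊕ Fin n) → M)
    (e : (((Fin n ⊕ Fin n) × (Fin n ⊕ Fin n)) × ((Fin n ⊕ Fin n) × (Fin n ⊕ Fin n))) ≃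
      (((Fin n ⊕ Fin n) × (Fin n ⊕ Fin n)) × ((Fin n ⊕ Fin n) × (Fin n ⊕ Fin n))))
    (h : ∀ t, F t.1.1 t.1.2 t.2.1 t.2.2 = G (e t).1.1 (e t).1.2 (e t).2.1 (e t).2.2) :
    (∑ j, ∑ k, ∑ l, ∑ m, F j k l m) = ∑ j, ∑ k, ∑ l, ∑ m, G j k l m := by
  rw [sum4 F, sum4 G]
  exact Fintype.sum_equiv e _ _ h

lemma triple_entry (X Y : Matrix (Fin n ⊕ Fin n) (Fin n ⊕ Fin n) ℝ)
    (r s : Fin n ⊕ Fin n) :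
    (X * stdJ n * Y) r s = ∑ u, ∑ v, X r u * stdJ n u v * Y v s := by
  simp only [Matrix.mul_apply, Finset.sum_mul]
  rw [Finset.sum_comm]

end DeltaAux

open DeltaAux in
/-- **Commutator identity for twisted second-order operators:**
`(i/4π)² (Δ_{S₁}Δ_{S₂} - Δ_{S₂}Δ_{S₁}) f = (i/4π) Δ_{[S₁,S₂]} f`. -/
theorem deltaOp_commutator
    (n : ℕ) (hn : 1 ≤ n)
    (A₁ A₂ : Matrix (Fin n ⊕ Fin n) (Fin n ⊕ Fin n) ℝ)
    (hA₁ : A₁.IsSymm) (hA₂ : A₂.IsSymm)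
    (f : ((Fin n ⊕ Fin n) → ℝ) → ℂ) (hf : ContDiff ℝ (⊤ : ℕ∞) f)
    (S₁ S₂ : Matrix (Fin n ⊕ Fin n) (Fin n ⊕ Fin n) ℝ)
    (hS₁ : S₁ = -A₁ * stdJ n) (hS₂ : S₂ = -A₂ * stdJ n) :
    ∀ z : (Fin n ⊕ Fin n) → ℝ,
      (Complex.I / (4 * Real.pi)) ^ 2 *
          (DeltaOp A₁ (DeltaOp A₂ f) z - DeltaOp A₂ (DeltaOp A₁ f) z) =
        Complex.I / (4 * Real.pi) * DeltaOp ((S₁ * S₂ - S₂ * S₁) * stdJ n) f z := by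
  intro z
  subst hS₁ hS₂
  have hf0 : ContDiff ℝ ∞ f := hf.of_le (by simp)
  set T : (Fin n ⊕ Fin n) → (Fin n ⊕ Fin n) → ℂ :=
    fun p q => twistedDeriv p (twistedDeriv q f) z with hT
  set G : (Fin n ⊕ Fin n) → (Fin n ⊕ Fin n) → (Fin n ⊕ Fin n) → (Fin n ⊕ Fin n) → ℂ :=
    fun a b c d => twistedDeriv a (twistedDeriv b (twistedDeriv c (twistedDeriv d f))) z
    with hG
  have hdiff2 : ∀ p : (Fin n ⊕ Fin n) × (Fin n ⊕ Fin n),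
      ContDiff ℝ ∞ (twistedDeriv p.1 (twistedDeriv p.2 f)) :=
    fun p => td_contDiff (td_contDiff hf0 p.2) p.1
  -- expansion of the composed operators into quadruple sums
  have expand : ∀ (A B : Matrix (Fin n ⊕ Fin n) (Fin n ⊕ Fin n) ℝ),
      DeltaOp A (DeltaOp B f) z =
        ∑ j, ∑ k, ∑ l, ∑ m, (A j k : ℂ) * (B l m : ℂ) * G j k l m := by
    intro A B
    have hDB : DeltaOp B f = fun w => ∑ p : (Fin n ⊕ Fin n) × (Fin n ⊕ Fin n),
        (B p.1 p.2 : ℂ) * twistedDeriv p.1 (twistedDeriv p.2 f) w := by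
      funext w
      simp [DeltaOp, Fintype.sum_prod_type]
    have step1 : ∀ kk, twistedDeriv kk (DeltaOp B f) =
        fun w => ∑ p : (Fin n ⊕ Fin n) × (Fin n ⊕ Fin n), (B p.1 p.2 : ℂ) *
          twistedDeriv kk (twistedDeriv p.1 (twistedDeriv p.2 f)) w := by
      intro kk; funext w
      rw [hDB]
      exact td_sum Finset.univ _ _
        (fun p _ => (hdiff2 p).differentiable (by simp)) kk w
    have step2 : ∀ jj kk, twistedDeriv jj (twistedDeriv kk (DeltaOp B f)) z =
        ∑ p : (Fin n ⊕ Fin n) × (Fin n ⊕ Fin n), (B p.1 p.2 : ℂ) *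
          twistedDeriv jj (twistedDeriv kk (twistedDeriv p.1 (twistedDeriv p.2 f))) z := by
      intro jj kk
      rw [step1 kk]
      exact td_sum Finset.univ _ _
        (fun p _ => (td_contDiff (hdiff2 p) kk).differentiable (by simp)) jj z
    simp only [DeltaOp]
    refine Finset.sum_congr rfl fun j _ => Finset.sum_congr rfl fun k _ => ?_
    rw [step2 j k, Finset.mul_sum, Fintype.sum_prod_type]
    exact Finset.sum_congr rfl fun l _ => Finset.sum_congr rfl fun m _ => by
      rw [hG]; ring
  -- reindex the second composed operator
  have swap2 : DeltaOp A₂ (DeltaOp A₁ f) z =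
      ∑ j, ∑ k, ∑ l, ∑ m, (A₁ j k : ℂ) * (A₂ l m : ℂ) * G l m j k := by
    rw [expand A₂ A₁]
    exact sum4_reindex _ _ ⟨fun t => (t.2, t.1), fun t => (t.2, t.1),
      fun t => rfl, fun t => rfl⟩ (fun t => by simp only [Equiv.coe_fn_mk]; ring)
  -- the commutator as a quadruple sum
  have comb : DeltaOp A₁ (DeltaOp A₂ f) z - DeltaOp A₂ (DeltaOp A₁ f) z =
      ∑ j, ∑ k, ∑ l, ∑ m, (A₁ j k : ℂ) * (A₂ l m : ℂ) * (G j k l m - G l m j k) := by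
    rw [expand A₁ A₂, swap2]
    simp only [← Finset.sum_sub_distrib, mul_sub]
  set Xsum : ℂ := ∑ r, ∑ s, ∑ u, ∑ v,
    (A₁ r u : ℂ) * ((stdJ n u v : ℝ) : ℂ) * (A₂ v s : ℂ) * T r s with hX
  set Ysum : ℂ := ∑ r, ∑ s, ∑ u, ∑ v,
    (A₂ r u : ℂ) * ((stdJ n u v : ℝ) : ℂ) * (A₁ v s : ℂ) * T r s with hY
  -- the four contraction identities
  have t1 : (∑ j, ∑ k, ∑ l, ∑ m, (A₁ j k : ℂ) * (A₂ l m : ℂ) *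
      ((stdJ n j l : ℝ) : ℂ) * T k m) = Xsum := by
    rw [hX]
    refine sum4_reindex _ _ ⟨fun t => ((t.1.2, t.2.2), (t.1.1, t.2.1)),
      fun t => ((t.2.1, t.1.1), (t.2.2, t.1.2)), fun t => rfl, fun t => rfl⟩
      (fun t => ?_)
    simp only [Equiv.coe_fn_mk]
    rw [hA₁.apply t.1.1 t.1.2]
    ring
  have t2 : (∑ j, ∑ k, ∑ l, ∑ m, (A₁ j k : ℂ) * (A₂ l m : ℂ) *
      ((stdJ n k l : ℝ) : ℂ) * T j m) = Xsum := by
    rw [hX]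
    refine sum4_reindex _ _ ⟨fun t => ((t.1.1, t.2.2), (t.1.2, t.2.1)),
      fun t => ((t.1.1, t.2.1), (t.2.2, t.1.2)), fun t => rfl, fun t => rfl⟩
      (fun t => ?_)
    simp only [Equiv.coe_fn_mk]
    ring
  have t3 : (∑ j, ∑ k, ∑ l, ∑ m, (A₁ j k : ℂ) * (A₂ l m : ℂ) *
      ((stdJ n j m : ℝ) : ℂ) * T l k) = -Ysum := by
    have : (∑ j, ∑ k, ∑ l, ∑ m, (A₁ j k : ℂ) * (A₂ l m : ℂ) *
        ((stdJ n j m : ℝ) : ℂ) * T l k) =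
        ∑ r, ∑ s, ∑ u, ∑ v,
          -((A₂ r u : ℂ) * ((stdJ n u v : ℝ) : ℂ) * (A₁ v s : ℂ) * T r s) := by
      refine sum4_reindex _ _ ⟨fun t => ((t.2.1, t.1.2), (t.2.2, t.1.1)),
        fun t => ((t.2.2, t.1.2), (t.1.1, t.2.1)), fun t => rfl, fun t => rfl⟩
        (fun t => ?_)
      simp only [Equiv.coe_fn_mk]
      rw [show (stdJ n t.1.1 t.2.2 : ℝ) = - stdJ n t.2.2 t.1.1 from
        (stdJ_antisymm t.2.2 t.1.1)]
      push_cast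
      ring
    rw [this, hY]
    simp only [Finset.sum_neg_distrib]
  have t4 : (∑ j, ∑ k, ∑ l, ∑ m, (A₁ j k : ℂ) * (A₂ l m : ℂ) *
      ((stdJ n k m : ℝ) : ℂ) * T l j) = -Ysum := by
    have : (∑ j, ∑ k, ∑ l, ∑ m, (A₁ j k : ℂ) * (A₂ l m : ℂ) *
        ((stdJ n k m : ℝ) : ℂ) * T l j) =
        ∑ r, ∑ s, ∑ u, ∑ v,
          -((A₂ r u : ℂ) * ((stdJ n u v : ℝ) : ℂ) * (A₁ v s : ℂ) * T r s) := by
      refine sum4_reindex _ _ ⟨fun t => ((t.2.1, t.1.1), (t.2.2, t.1.2)),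
        fun t => ((t.1.2, t.2.2), (t.1.1, t.2.1)), fun t => rfl, fun t => rfl⟩
        (fun t => ?_)
      simp only [Equiv.coe_fn_mk]
      rw [hA₁.apply t.1.1 t.1.2,
        show (stdJ n t.1.2 t.2.2 : ℝ) = - stdJ n t.2.2 t.1.2 from
          (stdJ_antisymm t.2.2 t.1.2)]
      push_cast
      ring
    rw [this, hY]
    simp only [Finset.sum_neg_distrib]
  -- put the key identity into the quadruple sum
  have main : (∑ j, ∑ k, ∑ l, ∑ m, (A₁ j k : ℂ) * (A₂ l m : ℂ) * (G j k l m - G l m j k))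
      = 2 * (Real.pi : ℂ) * Complex.I * (2 * (Xsum - Ysum)) := by
    have step : (∑ j, ∑ k, ∑ l, ∑ m,
        (A₁ j k : ℂ) * (A₂ l m : ℂ) * (G j k l m - G l m j k)) =
        ∑ j, ∑ k, ∑ l, ∑ m,
          (2 * (Real.pi : ℂ) * Complex.I *
              ((A₁ j k : ℂ) * (A₂ l m : ℂ) * ((stdJ n j l : ℝ) : ℂ) * T k m)
            + 2 * (Real.pi : ℂ) * Complex.I *
              ((A₁ j k : ℂ) * (A₂ l m : ℂ) * ((stdJ n k l : ℝ) : ℂ) * T j m)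
            + 2 * (Real.pi : ℂ) * Complex.I *
              ((A₁ j k : ℂ) * (A₂ l m : ℂ) * ((stdJ n j m : ℝ) : ℂ) * T l k)
            + 2 * (Real.pi : ℂ) * Complex.I *
              ((A₁ j k : ℂ) * (A₂ l m : ℂ) * ((stdJ n k m : ℝ) : ℂ) * T l j)) := by
      refine Finset.sum_congr rfl fun j _ => Finset.sum_congr rfl fun k _ =>
        Finset.sum_congr rfl fun l _ => Finset.sum_congr rfl fun m _ => ?_
      have hk := key hf0 j k l m z
      simp only [hG, hT]
      rw [hk]
      ring
    rw [step]
    simp only [Finset.sum_add_distrib, ← Finset.mul_sum]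
    rw [t1, t2, t3, t4]
    ring
  -- the right-hand side matrix
  have hC : (-A₁ * stdJ n * (-A₂ * stdJ n) - -A₂ * stdJ n * (-A₁ * stdJ n)) * stdJ n
      = A₂ * stdJ n * A₁ - A₁ * stdJ n * A₂ := by
    have h := stdJ_mul_stdJ (n := n)
    simp only [neg_mul, mul_neg, neg_neg, sub_mul, mul_assoc, h, mul_neg_one, mul_one]
    abel
  have hRHS : DeltaOp ((-A₁ * stdJ n * (-A₂ * stdJ n) - -A₂ * stdJ n * (-A₁ * stdJ n))
      * stdJ n) f z = Ysum - Xsum := by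
    rw [hC]
    show (∑ r, ∑ s, (((A₂ * stdJ n * A₁ - A₁ * stdJ n * A₂) r s : ℝ) : ℂ) * T r s) = _
    rw [hX, hY]
    simp only [Matrix.sub_apply, triple_entry, Complex.ofReal_sub, Complex.ofReal_sum,
      Complex.ofReal_mul, Finset.sum_sub_distrib, Finset.sum_mul, sub_mul]
  rw [comb, main, hRHS]
  have hπ : (Real.pi : ℂ) ≠ 0 := Complex.ofReal_ne_zero.mpr Real.pi_ne_zero
  field_simp
  simp only [Complex.I_sq]
  ring
end

section
/- Nondegeneracy of the lifted skew form (MW property of the lift H): Let B : ℝᵐ × ℝᵐ → ℝˡ be an alternating bilinear map, let μ ∈ ℝˡ and λ ∈ ℝ with λ ≠ 0. Define the bilinear form ω_{(μ,λ)} on ℝᵐ × ℝᵐ (pairs (v,ξ) with v ∈ ℝᵐ, ξ ∈ ℝᵐ) by ω_{(μ,λ)}((v,ξ),(v',ξ')) := μ·B(v,v') + λ(ξ'·v − ξ·v'). Then ω_{(μ,λ)} is a nondegenerate skew-symmetric bilinear form on ℝᵐ × ℝᵐ. -/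
/-!
Skew-symmetry is inherited from the alternating map `B` and from the antisymmetric pairing term
`ξ'·v − ξ·v'`. For nondegeneracy, pairing `(v, ξ)` against `(0, η)` leaves only `λ (η·v)`, which
forces `v = 0`; then pairing against `(w, 0)` leaves `−λ (ξ·w)`, which forces `ξ = 0`.
-/

open Matrix

variable {R n ι : Type*} [CommRing R] [Fintype n] [Fintype ι]

/-- The form `ω_{(μ,λ)}` on `𝔥₁ = (n → R) × (n → R)` induced by the central functional `(μ, λ)`. -/
def liftedSkewForm (B : (n → R) →ₗ[R] (n → R) →ₗ[R] (ι → R)) (μ : ι → R) (lam : R)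
    (p q : (n → R) × (n → R)) : R :=
  μ ⬝ᵥ B p.1 q.1 + lam * (q.2 ⬝ᵥ p.1 - p.2 ⬝ᵥ q.1)

theorem liftedSkewForm_antisymm {B : (n → R) →ₗ[R] (n → R) →ₗ[R] (ι → R)} (hB : B.IsAlt)
    (μ : ι → R) (lam : R) (p q : (n → R) × (n → R)) :
    liftedSkewForm B μ lam p q = -liftedSkewForm B μ lam q p := by
  rw [liftedSkewForm, liftedSkewForm, ← hB.neg, dotProduct_neg]
  ring

theorem liftedSkewForm_apply_zero_mk (B : (n → R) →ₗ[R] (n → R) →ₗ[R] (ι → R)) (μ : ι → R)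
    (lam : R) (p : (n → R) × (n → R)) (η : n → R) :
    liftedSkewForm B μ lam p (0, η) = lam * (p.1 ⬝ᵥ η) := by
  simp [liftedSkewForm, dotProduct_comm]

theorem liftedSkewForm_zero_mk_apply_mk_zero (B : (n → R) →ₗ[R] (n → R) →ₗ[R] (ι → R)) (μ : ι → R)
    (lam : R) (ξ w : n → R) :
    liftedSkewForm B μ lam (0, ξ) (w, 0) = -(lam * (ξ ⬝ᵥ w)) := by
  simp [liftedSkewForm]

theorem liftedSkewForm_nondegenerate [NoZeroDivisors R]
    (B : (n → R) →ₗ[R] (n → R) →ₗ[R] (ι → R)) (μ : ι → R) {lam : R} (hlam : lam ≠ 0)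
    {p : (n → R) × (n → R)} (hp : ∀ q, liftedSkewForm B μ lam p q = 0) : p = 0 := by
  obtain ⟨v, ξ⟩ := p
  have hv : v = 0 := dotProduct_eq_zero v fun η => by
    simpa [liftedSkewForm_apply_zero_mk, hlam] using hp (0, η)
  subst hv
  have hξ : ξ = 0 := dotProduct_eq_zero ξ fun w => by
    simpa [liftedSkewForm_zero_mk_apply_mk_zero, hlam] using hp (w, 0)
  rw [hξ, Prod.mk_zero_zero]

/-- **Nondegeneracy of the lifted skew form (MW property of the lift `H`).**
For an alternating bilinear map `B : ℝᵐ × ℝᵐ → ℝˡ`, `μ ∈ ℝˡ` and `λ ≠ 0`, the form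
`ω((v,ξ),(v',ξ')) = μ·B(v,v') + λ(ξ'·v − ξ·v')` on `ℝᵐ × ℝᵐ` is a nondegenerate
skew-symmetric bilinear form. -/
theorem lifted_skew_form_nondegenerate
    (m l : ℕ)
    (B : (Fin m → ℝ) →ₗ[ℝ] (Fin m → ℝ) →ₗ[ℝ] (Fin l → ℝ))
    (hB : ∀ v : Fin m → ℝ, B v v = 0)
    (μ : Fin l → ℝ) (lam : ℝ) (hlam : lam ≠ 0) :
    (∀ p q : (Fin m → ℝ) × (Fin m → ℝ),
        (μ ⬝ᵥ B p.1 q.1 + lam * (q.2 ⬝ᵥ p.1 - p.2 ⬝ᵥ q.1)) =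
          -(μ ⬝ᵥ B q.1 p.1 + lam * (p.2 ⬝ᵥ q.1 - q.2 ⬝ᵥ p.1))) ∧
    (∀ p : (Fin m → ℝ) × (Fin m → ℝ),
        (∀ q : (Fin m → ℝ) × (Fin m → ℝ),
          μ ⬝ᵥ B p.1 q.1 + lam * (q.2 ⬝ᵥ p.1 - p.2 ⬝ᵥ q.1) = 0) → p = 0) :=
  ⟨liftedSkewForm_antisymm hB μ lam, fun _ hp => liftedSkewForm_nondegenerate B μ hlam hp⟩
end
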